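/- Let A be an arborescence with weight functions w, c : E(A) → ℝ_{>0} satisfying the combined triangle inequality and the combined 2-optimality condition, let l > 0, and let E' := {(x,y) ∈ E(A) : c(x,y) < l · max_{f ∈ δ⁺(y)} c(f)} (with max over the empty set equal to −∞). Then c(E') ≤ (l/2) · w(A). -/
import Mathlib


open Classical

/-- An arborescence: a connected directed acyclic graph in which every vertex
has in-degree at most 1, encoded by its finite vertex set, its root, and the
parent map.  Every non-root vertex `v` carries the unique incoming edge
`(parent v, v)`, so edges are identified with non-root vertices. -/
structure Arbor (α : Type*) where
  verts : Finset α
  root : α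
  parent : α → α
  root_mem : root ∈ verts
  parent_mem : ∀ v ∈ verts, v ≠ root → parent v ∈ verts
  reaches_root : ∀ v ∈ verts, ∃ n : ℕ, parent^[n] v = root

variable {α : Type*} [DecidableEq α]

/-- The edges of an arborescence, identified with the non-root vertices:
the vertex `v` stands for the edge `(parent v, v)`. -/
def Arbor.edges (A : Arbor α) : Finset α := A.verts.erase A.root

/-- `δ⁺(y)`: the edges leaving `y`, identified with the children of `y`. -/
def Arbor.children (A : Arbor α) (y : α) : Finset α :=
  A.edges.filter fun u => A.parent u = y

/-- The combined triangle inequality: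
`c(e) ≤ w(e) + ∑_{f ∈ δ⁺(y)} c(f)` for every edge `e = (x,y)`. -/
def Arbor.CombinedTriangle (A : Arbor α) (w c : α → ℝ) : Prop :=
  ∀ y ∈ A.edges, c y ≤ w y + ∑ u ∈ A.children y, c u

/-- The combined 2-optimality condition:
`c(x,y) + c(y,z) ≤ w(x,y) + ∑_{f ∈ δ⁺(y) \ {(y,z)}} c(f)`
for all pairs of edges `(x,y), (y,z)`. -/
def Arbor.Combined2Opt (A : Arbor α) (w c : α → ℝ) : Prop :=
  ∀ y ∈ A.edges, ∀ z ∈ A.edges, A.parent z = y →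
    c y + c z ≤ w y + ∑ u ∈ (A.children y).erase z, c u
/-- Let `A` be an arborescence with positive weight functions `w, c` on its
edges satisfying the combined triangle inequality and the combined
2-optimality condition, let `l > 0`, and let
`E' = {(x,y) ∈ E(A) : c(x,y) < l · max_{f ∈ δ⁺(y)} c(f)}`
(for edges leaving a vertex with no children the maximum over the empty set is
`−∞`, i.e. such edges are not in `E'`; equivalently `(x,y) ∈ E'` iff
`c(x,y) < l · c(f)` for some `f ∈ δ⁺(y)`).  Then `c(E') ≤ (l/2) · w(A)`. -/
theorem arborescence_small_edges_bound {α : Type*} [DecidableEq α]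
    (A : Arbor α) (w c : α → ℝ)
    (hw : ∀ v ∈ A.edges, 0 < w v) (hc : ∀ v ∈ A.edges, 0 < c v)
    (htri : A.CombinedTriangle w c) (h2opt : A.Combined2Opt w c)
    (l : ℝ) (hl : 0 < l) :
    ∑ v ∈ A.edges.filter (fun y => ∃ z ∈ A.children y, c y < l * c z), c v ≤
      l / 2 * ∑ v ∈ A.edges, w v :=  by
  classical
  set E := A.edges with hE
  have key : ∀ y ∈ E,
      (if ∃ z ∈ A.children y, c y < l * c z then (2/l) * c y else 0)
        ≤ w y + (∑ u ∈ A.children y, c u) - c y := by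
    intro y hy
    split_ifs with h
    · obtain ⟨z, hz, hlt⟩ := h
      have hz' : z ∈ E := (Finset.mem_filter.mp hz).1
      have hpz : A.parent z = y := (Finset.mem_filter.mp hz).2
      have h2 := h2opt y hy z hz' hpz
      have hsub : ∑ u ∈ (A.children y).erase z, c u
          = (∑ u ∈ A.children y, c u) - c z := Finset.sum_erase_eq_sub hz
      rw [hsub] at h2
      have hzy : (2/l) * c y ≤ 2 * c z := by
        rw [div_mul_eq_mul_div, div_le_iff₀ hl]
        nlinarith
      linarith
    · have := htri y hy
      linarith
  have hsum1 := Finset.sum_le_sum key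
  have hswap : ∑ y ∈ E, ∑ u ∈ A.children y, c u ≤ ∑ u ∈ E, c u := by
    have h1 : ∀ y, ∑ u ∈ A.children y, c u
        = ∑ u ∈ E, (if A.parent u = y then c u else 0) := by
      intro y
      rw [Arbor.children, ← hE, Finset.sum_filter]
    calc ∑ y ∈ E, ∑ u ∈ A.children y, c u
        = ∑ y ∈ E, ∑ u ∈ E, (if A.parent u = y then c u else 0) := by
          simp only [h1]
      _ = ∑ u ∈ E, ∑ y ∈ E, (if A.parent u = y then c u else 0) :=
          Finset.sum_comm
      _ = ∑ u ∈ E, (if A.parent u ∈ E then c u else 0) := by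
          refine Finset.sum_congr rfl fun u hu => ?_
          exact Finset.sum_ite_eq E (A.parent u) (fun _ => c u)
      _ ≤ ∑ u ∈ E, c u := by
          refine Finset.sum_le_sum fun u hu => ?_
          split_ifs
          · exact le_refl _
          · exact le_of_lt (hc u hu)
  have hRHS : ∑ y ∈ E, (w y + (∑ u ∈ A.children y, c u) - c y)
      ≤ ∑ y ∈ E, w y := by
    rw [Finset.sum_sub_distrib, Finset.sum_add_distrib]
    linarith
  have hLHS : ∑ y ∈ E, (if ∃ z ∈ A.children y, c y < l * c z then (2/l) * c y else 0)
      = (2/l) * ∑ v ∈ E.filter (fun y => ∃ z ∈ A.children y, c y < l * c z), c v := by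
    rw [Finset.sum_filter, Finset.mul_sum]
    exact Finset.sum_congr rfl fun y _ => by rw [mul_ite, mul_zero]
  have hfinal : (2/l) * ∑ v ∈ E.filter (fun y => ∃ z ∈ A.children y, c y < l * c z), c v
      ≤ ∑ y ∈ E, w y := by
    rw [← hLHS]; exact le_trans hsum1 hRHS
  rw [div_mul_eq_mul_div, div_le_iff₀ hl] at hfinal
  nlinarith
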